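/- DL has the polynomial-size bisimilar model property: for all modal formulas φ, ψ with σ = sig(φ) ∪ sig(ψ) and ρ = sig(φ) ∩ sig(ψ), the implication φ → ψ has no interpolant in DL if and only if there exist σ-models M_φ and M_ψ based on symmetric weakly transitive frames, with roots r_φ and r_ψ, each having at most 12·(n(φ) + n(ψ)) points, such that (i) M_φ,r_φ ⊨ φ and M_ψ,r_ψ ⊨ ¬ψ, and (ii) M_φ,r_φ ∼ρ M_ψ,r_ψ. -/

import Mathlib

/-- Modal formulas built from propositional variables (indexed by ℕ),
constants ⊤, ⊥, negation, conjunction and the modal operator ◇. -/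
inductive MF : Type where
  | var : ℕ → MF
  | top : MF
  | bot : MF
  | neg : MF → MF
  | and : MF → MF → MF
  | dia : MF → MF
deriving DecidableEq

namespace MF

/-- Disjunction, as an abbreviation. -/
def or (a b : MF) : MF := neg (and (neg a) (neg b))

/-- Implication, as an abbreviation. -/
def imp (a b : MF) : MF := MF.or (neg a) b

/-- Box, as an abbreviation: □φ := ¬◇¬φ. -/
def box (a : MF) : MF := neg (dia (neg a))

/-- The (finite) set of propositional variables occurring in a formula. -/
def sig : MF → Finset ℕ
  | var n => {n}
  | top => ∅
  | bot => ∅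
  | neg a => a.sig
  | and a b => a.sig ∪ b.sig
  | dia a => a.sig

/-- The set of subformulas of a formula. -/
def subf : MF → Finset MF
  | var n => {var n}
  | top => {top}
  | bot => {bot}
  | neg a => insert (neg a) (subf a)
  | and a b => insert (and a b) (subf a ∪ subf b)
  | dia a => insert (dia a) (subf a)

/-- The number of subformulas of a formula. -/
def nsub (a : MF) : ℕ := (subf a).card

end MF

/-- A Kripke model: a binary (accessibility) relation on worlds together with
a valuation assigning to each propositional variable a set of worlds. -/
structure KModel (W : Type) where
  R : W → W → Prop
  val : ℕ → W → Prop

/-- Weak transitivity: xRy and yRz imply x = z or xRz. -/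
def WTrans {W : Type} (R : W → W → Prop) : Prop :=
  ∀ x y z : W, R x y → R y z → x = z ∨ R x z

/-- The usual Kripke truth relation. -/
def Sat {W : Type} (M : KModel W) : W → MF → Prop
  | x, .var n => M.val n x
  | _, .top => True
  | _, .bot => False
  | x, .neg a => ¬ Sat M x a
  | x, .and a b => Sat M x a ∧ Sat M x b
  | x, .dia a => ∃ y, M.R x y ∧ Sat M y a

/-- wK4-validity: truth at every point of every model based on a weakly
transitive frame. -/
def WK4Valid (φ : MF) : Prop :=
  ∀ (W : Type) (M : KModel W), WTrans M.R → ∀ x : W, Sat M x φ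

/-- The cluster of a point x: C(x) = {x} ∪ {y | xRy and yRx}. -/
def cluster {W : Type} (R : W → W → Prop) (x : W) : Set W :=
  {x} ∪ {y | R x y ∧ R y x}

/-- C R C' for sets of points: xRy for some x ∈ C, y ∈ C'. -/
def clusterRel {W : Type} (R : W → W → Prop) (C C' : Set W) : Prop :=
  ∃ x ∈ C, ∃ y ∈ C', R x y

/-- C R y for a set C and point y: xRy for some x ∈ C. -/
def clusterRelPt {W : Type} (R : W → W → Prop) (C : Set W) (y : W) : Prop :=
  ∃ x ∈ C, R x y

/-- C R^s C': C R C' and C ≠ C'. -/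
def clusterRelS {W : Type} (R : W → W → Prop) (C C' : Set W) : Prop :=
  clusterRel R C C' ∧ C ≠ C'

/-- A set is a cluster if it is the cluster of some point. -/
def IsCluster {W : Type} (R : W → W → Prop) (C : Set W) : Prop :=
  ∃ x : W, C = cluster R x

/-- A σ-model is descriptive if it satisfies (dif), (ref) and (com). -/
def Descriptive {W : Type} (σ : Finset ℕ) (M : KModel W) : Prop :=
  (∀ x y : W, (∀ φ : MF, φ.sig ⊆ σ → (Sat M x φ ↔ Sat M y φ)) → x = y) ∧
  (∀ x y : W, M.R x y ↔ ∀ χ : MF, χ.sig ⊆ σ → Sat M y χ → Sat M x (MF.dia χ)) ∧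
  (∀ Γ : Set MF, (∀ φ ∈ Γ, φ.sig ⊆ σ) →
    (∀ Γ' : Finset MF, ↑Γ' ⊆ Γ → ∃ x : W, ∀ φ ∈ Γ', Sat M x φ) →
    ∃ x : W, ∀ φ ∈ Γ, Sat M x φ)

/-- The ρ-type of a point: the set of all ρ-formulas true at it. -/
def rType {W : Type} (M : KModel W) (ρ : Finset ℕ) (x : W) : Set MF :=
  {φ : MF | φ.sig ⊆ ρ ∧ Sat M x φ}

/-- A cluster C is ρ-maximal if whenever C R y and some x ∈ C has the same
ρ-type as y, then y ∈ C. -/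
def RhoMaximal {W : Type} (M : KModel W) (ρ : Finset ℕ) (C : Set W) : Prop :=
  ∀ x ∈ C, ∀ y : W, clusterRelPt M.R C y → rType M ρ x = rType M ρ y → y ∈ C

/-- β is a ρ-bisimulation between M1 and M2: conditions (atom) and (move). -/
def IsBisim {W1 W2 : Type} (ρ : Finset ℕ) (M1 : KModel W1) (M2 : KModel W2)
    (β : W1 → W2 → Prop) : Prop :=
  ∀ x1 x2, β x1 x2 →
    (∀ n ∈ ρ, M1.val n x1 ↔ M2.val n x2) ∧
    (∀ y1, M1.R x1 y1 → ∃ y2, M2.R x2 y2 ∧ β y1 y2) ∧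
    (∀ y2, M2.R x2 y2 → ∃ y1, M1.R x1 y1 ∧ β y1 y2)

/-- M1,x1 ∼ρ M2,x2 : some ρ-bisimulation relates x1 to x2. -/
def Bisimilar {W1 W2 : Type} (ρ : Finset ℕ) (M1 : KModel W1) (x1 : W1)
    (M2 : KModel W2) (x2 : W2) : Prop :=
  ∃ β : W1 → W2 → Prop, IsBisim ρ M1 M2 β ∧ β x1 x2

/-- DL-validity via frames for DL: truth at every point of every model based
on a symmetric weakly transitive frame. -/
def DLValid (φ : MF) : Prop :=
  ∀ (W : Type) (M : KModel W), WTrans M.R → Symmetric M.R → ∀ x : W, Sat M x φ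


/-! In a symmetric weakly transitive frame, a point x together with the points it sees forms a
cluster: it is closed under R and any two distinct points of it are related. Up to
ρ-bisimulation a rooted cluster is therefore described by finitely many ρ-formulas: the root's
ρ-valuation, the ρ-valuations occurring in the cluster, and those among them realised by a point
that sees a point of the same valuation (two distinct points, or one reflexive point).
The disjunction of the descriptions realised by models of φ is an interpolant unless some model
of φ and some model of ¬ψ share a description. In that case keep, on either side, the root, two
witnesses for each subformula and two witnesses for each ρ-valuation occurring in either of
these selections: the φ-side then has at most (1 + 2n(φ)) + 2(2 + 2n(φ) + 2n(ψ)) points, which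
is at most 12·(n(φ) + n(ψ)), and having the same ρ-valuation is a bisimulation between the two
selections. -/

open Classical

namespace MF

def conj (l : List MF) : MF := l.foldr MF.and MF.top

def disj (l : List MF) : MF := l.foldr MF.or MF.bot

lemma sig_conj {l : List MF} {ρ : Finset ℕ} (h : ∀ f ∈ l, f.sig ⊆ ρ) : (conj l).sig ⊆ ρ := by
  induction l with
  | nil => simp [conj, sig]
  | cons f l ih =>
    simp only [List.forall_mem_cons] at h
    exact Finset.union_subset h.1 (ih h.2)

lemma sig_disj {l : List MF} {ρ : Finset ℕ} (h : ∀ f ∈ l, f.sig ⊆ ρ) : (disj l).sig ⊆ ρ := by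
  induction l with
  | nil => simp [disj, sig]
  | cons f l ih =>
    simp only [List.forall_mem_cons] at h
    exact Finset.union_subset h.1 (ih h.2)

lemma self_mem_subf (a : MF) : a ∈ a.subf := by
  cases a <;> simp [subf]

lemma nsub_pos (a : MF) : 0 < a.nsub :=
  Finset.card_pos.2 ⟨a, self_mem_subf a⟩

end MF

section Semantics

variable {W : Type} (M : KModel W) (x : W)

lemma sat_or (a b : MF) : Sat M x (MF.or a b) ↔ Sat M x a ∨ Sat M x b := by
  simp only [MF.or, Sat]
  tauto

lemma sat_imp (a b : MF) : Sat M x (MF.imp a b) ↔ (Sat M x a → Sat M x b) := by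
  simp only [MF.imp, sat_or, Sat]
  tauto

lemma sat_conj (l : List MF) : Sat M x (MF.conj l) ↔ ∀ f ∈ l, Sat M x f := by
  induction l with
  | nil => simp [MF.conj, Sat]
  | cons f l ih => simp [MF.conj, Sat, ← ih]

lemma sat_disj (l : List MF) : Sat M x (MF.disj l) ↔ ∃ f ∈ l, Sat M x f := by
  induction l with
  | nil => simp [MF.disj, Sat]
  | cons f l ih =>
    rw [MF.disj, List.foldr_cons, sat_or, ← MF.disj, ih]
    simp

end Semantics

lemma dlValid_imp_iff {φ ψ : MF} :
    DLValid (MF.imp φ ψ) ↔ ∀ (W : Type) (M : KModel W), WTrans M.R ∧ Symmetric M.R →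
      ∀ x, Sat M x φ → Sat M x ψ := by
  simp only [DLValid, sat_imp, and_imp]

lemma IsBisim.sat_iff {W1 W2 : Type} {ρ : Finset ℕ} {M1 : KModel W1} {M2 : KModel W2}
    {β : W1 → W2 → Prop} (hβ : IsBisim ρ M1 M2 β) {χ : MF} (hχ : χ.sig ⊆ ρ)
    {x1 : W1} {x2 : W2} (h : β x1 x2) : Sat M1 x1 χ ↔ Sat M2 x2 χ := by
  induction χ generalizing x1 x2 with
  | var n => exact (hβ x1 x2 h).1 n (hχ (by simp [MF.sig]))
  | top => simp [Sat]
  | bot => simp [Sat]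
  | neg a ih => exact not_congr (ih hχ h)
  | and a b iha ihb =>
    rw [MF.sig, Finset.union_subset_iff] at hχ
    exact and_congr (iha hχ.1 h) (ihb hχ.2 h)
  | dia a ih =>
    constructor
    · rintro ⟨y1, hxy, hy⟩
      obtain ⟨y2, hxy2, hβy⟩ := (hβ x1 x2 h).2.1 y1 hxy
      exact ⟨y2, hxy2, (ih hχ hβy).1 hy⟩
    · rintro ⟨y2, hxy, hy⟩
      obtain ⟨y1, hxy1, hβy⟩ := (hβ x1 x2 h).2.2 y2 hxy
      exact ⟨y1, hxy1, (ih hχ hβy).2 hy⟩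

noncomputable def charType (F T : Finset MF) : MF :=
  MF.conj (F.toList.map fun f => if f ∈ T then f else MF.neg f)

lemma sat_charType {W : Type} (M : KModel W) (x : W) (F T : Finset MF) :
    Sat M x (charType F T) ↔ ∀ f ∈ F, (Sat M x f ↔ f ∈ T) := by
  simp only [charType, sat_conj, List.forall_mem_map, Finset.mem_toList]
  refine forall₂_congr fun f _ => ?_
  split_ifs with hf <;> simp [Sat, hf]

lemma sig_charType {F : Finset MF} {ρ : Finset ℕ} (hF : ∀ f ∈ F, f.sig ⊆ ρ) (T : Finset MF) :
    (charType F T).sig ⊆ ρ := by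
  refine MF.sig_conj fun g hg => ?_
  obtain ⟨f, hf, rfl⟩ := List.mem_map.1 hg
  split_ifs <;> exact hF f (Finset.mem_toList.1 hf)

/-- The interpolant is the disjunction of the `F`-types realised by models of `φ`. -/
theorem exists_interpolant_of_agree (K : (W : Type) → KModel W → Prop) {φ ψ : MF}
    {ρ : Finset ℕ} (F : Finset MF) (hF : ∀ f ∈ F, f.sig ⊆ ρ)
    (hagree : ∀ (W : Type) (M : KModel W) (x : W) (U : Type) (N : KModel U) (y : U),
      K W M → K U N → Sat M x φ → (∀ f ∈ F, Sat M x f ↔ Sat N y f) → Sat N y ψ) :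
    ∃ ι : MF, ι.sig ⊆ ρ ∧ (∀ (W : Type) (M : KModel W), K W M → ∀ x, Sat M x φ → Sat M x ι) ∧
      (∀ (W : Type) (M : KModel W), K W M → ∀ x, Sat M x ι → Sat M x ψ) := by
  let Realized (T : Finset MF) : Prop :=
    ∃ (W : Type) (M : KModel W) (x : W), K W M ∧ Sat M x φ ∧ ∀ f ∈ F, (Sat M x f ↔ f ∈ T)
  let types := (F.powerset.filter Realized).toList
  refine ⟨MF.disj (types.map (charType F)), MF.sig_disj ?_, ?_, ?_⟩
  · simp only [List.forall_mem_map]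
    exact fun T _ => sig_charType hF T
  · intro W M hM x hφ
    have hT : F.filter (Sat M x) ∈ types := by
      simp only [types, Finset.mem_toList, Finset.mem_filter, Finset.mem_powerset]
      exact ⟨Finset.filter_subset _ _, W, M, x, hM, hφ, fun f hf => by simp [hf]⟩
    exact (sat_disj M x _).2
      ⟨_, List.mem_map_of_mem hT, (sat_charType M x F _).2 fun f hf => by simp [hf]⟩
  · intro U N hN y hι
    obtain ⟨_, hmem, hy⟩ := (sat_disj N y _).1 hι
    obtain ⟨T, hT, rfl⟩ := List.mem_map.1 hmem
    simp only [types, Finset.mem_toList, Finset.mem_filter] at hT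
    obtain ⟨W, M, x, hM, hφ, hx⟩ := hT.2
    rw [sat_charType] at hy
    exact hagree W M x U N y hM hN hφ fun f hf => (hx f hf).trans (hy f hf).symm

section Cluster

variable {W : Type} {R : W → W → Prop} {x z u : W}

lemma self_mem_cluster (R : W → W → Prop) (x : W) : x ∈ cluster R x :=
  Or.inl rfl

lemma rel_of_mem_cluster (hz : z ∈ cluster R x) (hne : z ≠ x) : R x z :=
  hz.resolve_left hne |>.1

lemma mem_cluster_of_rel (hs : Symmetric R) (h : R x z) : z ∈ cluster R x :=
  Or.inr ⟨h, hs h⟩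

lemma mem_cluster_of_mem_of_rel (hw : WTrans R) (hs : Symmetric R) (hz : z ∈ cluster R x)
    (h : R z u) : u ∈ cluster R x := by
  by_cases hzx : z = x
  · subst hzx
    exact mem_cluster_of_rel hs h
  · rcases hw x z u (rel_of_mem_cluster hz hzx) h with rfl | hxu
    · exact self_mem_cluster R _
    · exact mem_cluster_of_rel hs hxu

lemma rel_of_mem_cluster_of_ne (hw : WTrans R) (hs : Symmetric R) (hz : z ∈ cluster R x)
    (hu : u ∈ cluster R x) (hne : z ≠ u) : R z u := by
  by_cases hzx : z = x
  · subst hzx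
    exact rel_of_mem_cluster hu (Ne.symm hne)
  by_cases hux : u = x
  · subst hux
    exact hs (rel_of_mem_cluster hz hzx)
  · exact (hw z x u (hs (rel_of_mem_cluster hz hzx)) (rel_of_mem_cluster hu hux)).resolve_left hne

def IsWitnessSelector (R : W → W → Prop) (x : W) (S : (W → Prop) → Finset W) : Prop :=
  ∀ P : W → Prop, (S P).card ≤ 2 ∧ (∀ u ∈ S P, u ∈ cluster R x ∧ P u) ∧
    ∀ z ∈ cluster R x, ∀ z', R z z' → P z' → ∃ u ∈ S P, R z u ∧ P u

lemma exists_witnesses (hw : WTrans R) (hs : Symmetric R) (x : W) (P : W → Prop) :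
    ∃ S : Finset W, S.card ≤ 2 ∧ (∀ u ∈ S, u ∈ cluster R x ∧ P u) ∧
      ∀ z ∈ cluster R x, ∀ z', R z z' → P z' → ∃ u ∈ S, R z u ∧ P u := by
  by_cases htwo : ∃ p ∈ cluster R x, ∃ q ∈ cluster R x, P p ∧ P q ∧ p ≠ q
  · obtain ⟨p, hp, q, hq, hPp, hPq, hpq⟩ := htwo
    refine ⟨{p, q}, Finset.card_le_two, by simp [hp, hq, hPp, hPq], fun z hz _ _ _ => ?_⟩
    by_cases hzp : z = p
    · subst hzp
      exact ⟨q, by simp, rel_of_mem_cluster_of_ne hw hs hz hq hpq, hPq⟩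
    · exact ⟨p, by simp, rel_of_mem_cluster_of_ne hw hs hz hp hzp, hPp⟩
  by_cases hone : ∃ p ∈ cluster R x, P p
  · obtain ⟨p, hp, hPp⟩ := hone
    refine ⟨{p}, by simp, by simp [hp, hPp], fun z hz z' hzz' hPz' => ⟨p, by simp, ?_, hPp⟩⟩
    have : z' = p := by
      by_contra hne
      exact htwo ⟨z', mem_cluster_of_mem_of_rel hw hs hz hzz', p, hp, hPz', hPp, hne⟩
    exact this ▸ hzz'
  · refine ⟨∅, by simp, by simp, fun z hz z' hzz' hPz' => ?_⟩
    exact absurd ⟨z', mem_cluster_of_mem_of_rel hw hs hz hzz', hPz'⟩ hone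

lemma exists_isWitnessSelector (hw : WTrans R) (hs : Symmetric R) (x : W) :
    ∃ S, IsWitnessSelector R x S :=
  ⟨_, fun P => (exists_witnesses hw hs x P).choose_spec⟩

lemma exists_rel_of_mem_cluster (hw : WTrans R) (hs : Symmetric R) {P : W → Prop} {p : W}
    (hz : z ∈ cluster R x) (hp : p ∈ cluster R x) (hPp : P p)
    (hloop : P z → ∃ q ∈ cluster R x, P q ∧ ∃ u, R q u ∧ P u) : ∃ u, R z u ∧ P u := by
  by_cases hzp : z = p
  · subst hzp
    obtain ⟨q, hq, hPq, u, hqu, hPu⟩ := hloop hPp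
    by_cases hzq : z = q
    · exact ⟨u, hzq ▸ hqu, hPu⟩
    · exact ⟨q, rel_of_mem_cluster_of_ne hw hs hz hq hzq, hPq⟩
  · exact ⟨p, rel_of_mem_cluster_of_ne hw hs hz hp hzp, hPp⟩

end Cluster

section Valuations

variable {W : Type} (ρ : Finset ℕ)

noncomputable def rVal (M : KModel W) (z : W) : Finset ℕ := ρ.filter (M.val · z)

lemma rVal_subset (M : KModel W) (z : W) : rVal ρ M z ⊆ ρ :=
  Finset.filter_subset _ _

noncomputable def charVal (w : Finset ℕ) : MF :=
  MF.conj (ρ.toList.map fun p => if p ∈ w then MF.var p else MF.neg (MF.var p))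

lemma sig_charVal (w : Finset ℕ) : (charVal ρ w).sig ⊆ ρ := by
  refine MF.sig_conj fun f hf => ?_
  obtain ⟨p, hp, rfl⟩ := List.mem_map.1 hf
  split_ifs <;> simpa [MF.sig] using hp

variable {ρ}

lemma sat_charVal {w : Finset ℕ} (hw : w ⊆ ρ) (M : KModel W) (z : W) :
    Sat M z (charVal ρ w) ↔ rVal ρ M z = w := by
  simp only [charVal, sat_conj, List.forall_mem_map, Finset.mem_toList, Finset.ext_iff, rVal,
    Finset.mem_filter]
  constructor
  · intro h n
    by_cases hn : n ∈ ρ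
    · have := h n hn
      split_ifs at this with hnw <;> simp_all [Sat]
    · exact ⟨fun h' => absurd h'.1 hn, fun h' => absurd (hw h') hn⟩
  · intro h p hp
    split_ifs with hpw
    · exact ((h p).2 hpw).2
    · exact fun hv => hpw ((h p).1 ⟨hp, hv⟩)

def somewhere (θ : MF) : MF := MF.or θ (MF.dia θ)

lemma sat_somewhere {M : KModel W} (hs : Symmetric M.R) {x : W} {θ : MF} :
    Sat M x (somewhere θ) ↔ ∃ z ∈ cluster M.R x, Sat M z θ := by
  rw [somewhere, sat_or]
  constructor
  · rintro (h | ⟨z, hxz, hz⟩)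
    · exact ⟨x, self_mem_cluster _ x, h⟩
    · exact ⟨z, mem_cluster_of_rel hs hxz, hz⟩
  · rintro ⟨z, rfl | ⟨hxz, -⟩, hz⟩
    · exact Or.inl hz
    · exact Or.inr ⟨z, hxz, hz⟩

variable (ρ) in
noncomputable def clusterFormulas : Finset MF :=
  ρ.powerset.biUnion fun w =>
    {charVal ρ w, somewhere (charVal ρ w),
      somewhere (MF.and (charVal ρ w) (MF.dia (charVal ρ w)))}

lemma sig_clusterFormulas : ∀ f ∈ clusterFormulas ρ, f.sig ⊆ ρ := by
  intro f hf
  obtain ⟨w, -, hf⟩ := Finset.mem_biUnion.1 hf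
  have := sig_charVal ρ w
  simp only [Finset.mem_insert, Finset.mem_singleton] at hf
  rcases hf with rfl | rfl | rfl <;> simpa [somewhere, MF.or, MF.sig]

lemma mem_clusterFormulas {w : Finset ℕ} (hw : w ⊆ ρ) :
    charVal ρ w ∈ clusterFormulas ρ ∧ somewhere (charVal ρ w) ∈ clusterFormulas ρ ∧
      somewhere (MF.and (charVal ρ w) (MF.dia (charVal ρ w))) ∈ clusterFormulas ρ := by
  simp only [clusterFormulas, Finset.mem_biUnion, Finset.mem_powerset]
  exact ⟨⟨w, hw, by simp⟩, ⟨w, hw, by simp⟩, ⟨w, hw, by simp⟩⟩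

variable {U : Type} {M : KModel W} {N : KModel U} {x : W} {y : U}

lemma rVal_eq_of_agree (h : ∀ f ∈ clusterFormulas ρ, Sat M x f → Sat N y f) :
    rVal ρ M x = rVal ρ N y := by
  have hx := rVal_subset ρ M x
  exact ((sat_charVal hx N y).1 (h _ (mem_clusterFormulas hx).1 ((sat_charVal hx M x).2 rfl))).symm

/-- If the `ρ`-valuation of `u₁` occurs in the cluster of `y` only at `z₂`, then `z₁` and `u₁`
show that some point of that valuation sees another one, so `z₂` must see itself. -/
lemma exists_rel_rVal_eq_of_agree (hsM : Symmetric M.R) (hwN : WTrans N.R)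
    (hsN : Symmetric N.R) (h : ∀ f ∈ clusterFormulas ρ, Sat M x f → Sat N y f)
    {z₁ u₁ : W} {z₂ : U} (hz₁ : z₁ ∈ cluster M.R x) (hu₁ : u₁ ∈ cluster M.R x)
    (hz₂ : z₂ ∈ cluster N.R y) (hval : rVal ρ M z₁ = rVal ρ N z₂) (hzu : M.R z₁ u₁) :
    ∃ u₂, N.R z₂ u₂ ∧ rVal ρ N u₂ = rVal ρ M u₁ := by
  set w := rVal ρ M u₁
  have hw : w ⊆ ρ := rVal_subset ρ M u₁
  obtain ⟨-, hmem₂, hmem₃⟩ := mem_clusterFormulas hw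
  obtain ⟨p, hp, hPp⟩ := (sat_somewhere hsN).1
    (h _ hmem₂ ((sat_somewhere hsM).2 ⟨u₁, hu₁, (sat_charVal hw M u₁).2 rfl⟩))
  refine exists_rel_of_mem_cluster (P := fun u => rVal ρ N u = w) hwN hsN hz₂ hp
    ((sat_charVal hw N p).1 hPp) fun hz₂w => ?_
  have hloop : Sat M x (somewhere (MF.and (charVal ρ w) (MF.dia (charVal ρ w)))) :=
    (sat_somewhere hsM).2 ⟨z₁, hz₁, (sat_charVal hw M z₁).2 (hval.trans hz₂w),
      u₁, hzu, (sat_charVal hw M u₁).2 rfl⟩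
  obtain ⟨q, hq, hq₁, u, hqu, hu⟩ := (sat_somewhere hsN).1 (h _ hmem₃ hloop)
  exact ⟨q, hq, (sat_charVal hw N q).1 hq₁, u, hqu, (sat_charVal hw N u).1 hu⟩

end Valuations

namespace KModel

variable {W : Type} (M : KModel W) (A : Finset W)

def restrict : KModel {z // z ∈ A} where
  R a b := M.R a b
  val n a := M.val n a

variable {M}

lemma restrict_wTrans (hw : WTrans M.R) : WTrans (M.restrict A).R :=
  fun a b c hab hbc => (hw a b c hab hbc).imp Subtype.ext id

lemma restrict_symmetric (hs : Symmetric M.R) : Symmetric (M.restrict A).R :=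
  fun _ _ h => hs h

variable {A}

lemma restrict_rel_root {x : W} (hA : ∀ z ∈ A, z ∈ cluster M.R x) (hx : x ∈ A) :
    ∀ z : {z // z ∈ A}, z ≠ ⟨x, hx⟩ → (M.restrict A).R ⟨x, hx⟩ z :=
  fun z hz => rel_of_mem_cluster (R := M.R) (hA z z.2) fun h => hz (Subtype.ext h)

lemma sat_restrict_iff {χ : MF}
    (hA : ∀ a ∈ χ.subf, ∀ z ∈ A, ∀ z', M.R z z' → Sat M z' a → ∃ u ∈ A, M.R z u ∧ Sat M u a)
    (z : {z // z ∈ A}) : Sat (M.restrict A) z χ ↔ Sat M z χ := by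
  induction χ generalizing z with
  | var n => rfl
  | top => rfl
  | bot => rfl
  | neg a ih =>
    exact not_congr (ih (fun b hb => hA b (by simp [MF.subf, hb])) z)
  | and a b iha ihb =>
    exact and_congr (iha (fun c hc => hA c (by simp [MF.subf, hc])) z)
      (ihb (fun c hc => hA c (by simp [MF.subf, hc])) z)
  | dia a ih =>
    have ih' := ih fun b hb => hA b (by simp [MF.subf, hb])
    constructor
    · rintro ⟨u, hzu, hu⟩
      exact ⟨u, hzu, (ih' u).1 hu⟩
    · rintro ⟨z', hzz', hz'⟩
      obtain ⟨u, huA, hzu, hu⟩ :=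
        hA a (by simp [MF.subf, MF.self_mem_subf]) z z.2 z' hzz' hz'
      exact ⟨⟨u, huA⟩, hzu, (ih' ⟨u, huA⟩).2 hu⟩

end KModel

lemma isBisim_restrict_rVal {W U : Type} {M : KModel W} {N : KModel U} (hwM : WTrans M.R)
    (hsM : Symmetric M.R) (hwN : WTrans N.R) (hsN : Symmetric N.R) {ρ : Finset ℕ} {x : W}
    {y : U} (hagree : ∀ f ∈ clusterFormulas ρ, Sat M x f ↔ Sat N y f) {A : Finset W}
    {B : Finset U} (hA : ∀ z ∈ A, z ∈ cluster M.R x) (hB : ∀ z ∈ B, z ∈ cluster N.R y)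
    (hAB : ∀ a ∈ A, ∀ z ∈ B, ∀ u, N.R z u → rVal ρ N u = rVal ρ M a →
      ∃ u ∈ B, N.R z u ∧ rVal ρ N u = rVal ρ M a)
    (hBA : ∀ b ∈ B, ∀ z ∈ A, ∀ u, M.R z u → rVal ρ M u = rVal ρ N b →
      ∃ u ∈ A, M.R z u ∧ rVal ρ M u = rVal ρ N b) :
    IsBisim ρ (M.restrict A) (N.restrict B) fun a b => rVal ρ M a = rVal ρ N b := by
  rintro ⟨z₁, hz₁⟩ ⟨z₂, hz₂⟩ (hval : rVal ρ M z₁ = rVal ρ N z₂)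
  refine ⟨fun n hn => ?_, ?_, ?_⟩
  · have := congrArg (n ∈ ·) hval
    simpa [KModel.restrict, rVal, hn] using this
  · rintro ⟨u₁, hu₁⟩ (hzu : M.R z₁ u₁)
    obtain ⟨u, hzu', hu⟩ := exists_rel_rVal_eq_of_agree hsM hwN hsN (fun f hf => (hagree f hf).1)
      (hA z₁ hz₁) (hA u₁ hu₁) (hB z₂ hz₂) hval hzu
    obtain ⟨u₂, hu₂, hzu₂, hval₂⟩ := hAB u₁ hu₁ z₂ hz₂ u hzu' hu
    exact ⟨⟨u₂, hu₂⟩, hzu₂, hval₂.symm⟩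
  · rintro ⟨u₂, hu₂⟩ (hzu : N.R z₂ u₂)
    obtain ⟨u, hzu', hu⟩ := exists_rel_rVal_eq_of_agree hsN hwM hsM (fun f hf => (hagree f hf).2)
      (hB z₂ hz₂) (hB u₂ hu₂) (hA z₁ hz₁) hval.symm hzu
    obtain ⟨u₁, hu₁, hzu₁, hval₁⟩ := hBA u₂ hu₂ z₁ hz₁ u hzu' hu
    exact ⟨⟨u₁, hu₁⟩, hzu₁, hval₁⟩

section Selection

variable {W : Type} (M : KModel W) (S : (W → Prop) → Finset W) (x : W) (χ : MF)
  (ρ : Finset ℕ) (V : Finset (Finset ℕ))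

noncomputable def witnessCore : Finset W := insert x (χ.subf.biUnion fun a => S (Sat M · a))

noncomputable def witnessSet : Finset W :=
  witnessCore M S x χ ∪ V.biUnion fun w => S (rVal ρ M · = w)

lemma root_mem_witnessSet : x ∈ witnessSet M S x χ ρ V :=
  Finset.mem_union_left _ (Finset.mem_insert_self _ _)

variable {M S x}

lemma card_witnessCore_le (hS : IsWitnessSelector M.R x S) :
    (witnessCore M S x χ).card ≤ 1 + 2 * χ.nsub := by
  have := Finset.card_biUnion_le_card_mul χ.subf (fun a => S (Sat M · a)) 2 fun a _ => (hS _).1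
  have := Finset.card_insert_le x (χ.subf.biUnion fun a => S (Sat M · a))
  rw [witnessCore, MF.nsub]
  omega

lemma card_witnessSet_le (hS : IsWitnessSelector M.R x S) :
    (witnessSet M S x χ ρ V).card ≤ 1 + 2 * χ.nsub + 2 * V.card := by
  have := Finset.card_biUnion_le_card_mul V (fun w => S (rVal ρ M · = w)) 2 fun w _ => (hS _).1
  have := Finset.card_union_le (witnessCore M S x χ) (V.biUnion fun w => S (rVal ρ M · = w))
  have := card_witnessCore_le χ hS
  rw [witnessSet]
  omega

variable {χ ρ V}

lemma mem_cluster_of_mem_witnessSet (hS : IsWitnessSelector M.R x S) {z : W}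
    (hz : z ∈ witnessSet M S x χ ρ V) : z ∈ cluster M.R x := by
  simp only [witnessSet, witnessCore, Finset.mem_union, Finset.mem_insert, Finset.mem_biUnion]
    at hz
  rcases hz with (rfl | ⟨a, -, hz⟩) | ⟨w, -, hz⟩
  · exact self_mem_cluster _ _
  · exact ((hS _).2.1 z hz).1
  · exact ((hS _).2.1 z hz).1

lemma rVal_mem_of_mem_witnessSet (hS : IsWitnessSelector M.R x S)
    (hV : ∀ z ∈ witnessCore M S x χ, rVal ρ M z ∈ V) {z : W}
    (hz : z ∈ witnessSet M S x χ ρ V) : rVal ρ M z ∈ V := by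
  rcases Finset.mem_union.1 hz with hz | hz
  · exact hV z hz
  · obtain ⟨w, hw, hz⟩ := Finset.mem_biUnion.1 hz
    exact ((hS _).2.1 z hz).2 ▸ hw

lemma sat_restrict_witnessSet (hS : IsWitnessSelector M.R x S) :
    Sat (M.restrict (witnessSet M S x χ ρ V)) ⟨x, root_mem_witnessSet M S x χ ρ V⟩ χ ↔
      Sat M x χ := by
  refine KModel.sat_restrict_iff (fun a ha z hz z' hzz' hz' => ?_) _
  obtain ⟨u, hu, hzu, hua⟩ :=
    (hS (Sat M · a)).2.2 z (mem_cluster_of_mem_witnessSet hS hz) z' hzz' hz'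
  refine ⟨u, Finset.mem_union_left _ (Finset.mem_insert_of_mem ?_), hzu, hua⟩
  exact Finset.mem_biUnion.2 ⟨a, ha, hu⟩

lemma exists_rel_mem_witnessSet (hS : IsWitnessSelector M.R x S) {w : Finset ℕ} (hw : w ∈ V)
    {z u : W} (hz : z ∈ cluster M.R x) (hzu : M.R z u) (hu : rVal ρ M u = w) :
    ∃ u ∈ witnessSet M S x χ ρ V, M.R z u ∧ rVal ρ M u = w := by
  obtain ⟨u', hu', hzu', hu'w⟩ := (hS (rVal ρ M · = w)).2.2 z hz u hzu hu
  exact ⟨u', Finset.mem_union_right _ (Finset.mem_biUnion.2 ⟨w, hw, hu'⟩), hzu', hu'w⟩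

end Selection

theorem exists_small_bisimilar_of_agree {ρ : Finset ℕ} {φ ψ : MF} {W U : Type} {M : KModel W}
    {N : KModel U} (hwM : WTrans M.R) (hsM : Symmetric M.R) (hwN : WTrans N.R)
    (hsN : Symmetric N.R) {x : W} {y : U} (hφ : Sat M x φ) (hψ : ¬ Sat N y ψ)
    (hagree : ∀ f ∈ clusterFormulas ρ, Sat M x f ↔ Sat N y f) :
    ∃ (W1 : Type) (M1 : KModel W1) (r1 : W1) (W2 : Type) (M2 : KModel W2) (r2 : W2),
      Finite W1 ∧ Nat.card W1 ≤ 12 * (φ.nsub + ψ.nsub) ∧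
      Finite W2 ∧ Nat.card W2 ≤ 12 * (φ.nsub + ψ.nsub) ∧
      WTrans M1.R ∧ WTrans M2.R ∧ Symmetric M1.R ∧ Symmetric M2.R ∧
      (∀ x : W1, x ≠ r1 → M1.R r1 x) ∧ (∀ x : W2, x ≠ r2 → M2.R r2 x) ∧
      Sat M1 r1 φ ∧ Sat M2 r2 (MF.neg ψ) ∧ Bisimilar ρ M1 r1 M2 r2 := by
  obtain ⟨S, hS⟩ := exists_isWitnessSelector hwM hsM x
  obtain ⟨T, hT⟩ := exists_isWitnessSelector hwN hsN y
  set V := (witnessCore M S x φ).image (rVal ρ M) ∪ (witnessCore N T y ψ).image (rVal ρ N)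
  set A := witnessSet M S x φ ρ V
  set B := witnessSet N T y ψ ρ V
  have hV : V.card ≤ 2 + 2 * φ.nsub + 2 * ψ.nsub := by
    have := add_le_add ((Finset.card_image_le (f := rVal ρ M)).trans (card_witnessCore_le φ hS))
      ((Finset.card_image_le (f := rVal ρ N)).trans (card_witnessCore_le ψ hT))
    exact (Finset.card_union_le _ _).trans (by omega)
  have hA : A.card ≤ 1 + 2 * φ.nsub + 2 * V.card := card_witnessSet_le φ ρ V hS
  have hB : B.card ≤ 1 + 2 * ψ.nsub + 2 * V.card := card_witnessSet_le ψ ρ V hT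
  have := φ.nsub_pos
  have := ψ.nsub_pos
  have hAV : ∀ a ∈ A, rVal ρ M a ∈ V := fun a => rVal_mem_of_mem_witnessSet hS
    fun z hz => Finset.mem_union_left _ (Finset.mem_image_of_mem _ hz)
  have hBV : ∀ b ∈ B, rVal ρ N b ∈ V := fun b => rVal_mem_of_mem_witnessSet hT
    fun z hz => Finset.mem_union_right _ (Finset.mem_image_of_mem _ hz)
  refine ⟨_, M.restrict A, ⟨x, root_mem_witnessSet ..⟩, _, N.restrict B,
    ⟨y, root_mem_witnessSet ..⟩, inferInstance, ?_, inferInstance, ?_,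
    KModel.restrict_wTrans A hwM, KModel.restrict_wTrans B hwN,
    KModel.restrict_symmetric A hsM, KModel.restrict_symmetric B hsN,
    KModel.restrict_rel_root (fun _ => mem_cluster_of_mem_witnessSet hS) _,
    KModel.restrict_rel_root (fun _ => mem_cluster_of_mem_witnessSet hT) _,
    (sat_restrict_witnessSet hS).2 hφ, fun h => hψ ((sat_restrict_witnessSet hT).1 h),
    _, isBisim_restrict_rVal hwM hsM hwN hsN hagree
      (fun _ => mem_cluster_of_mem_witnessSet hS) (fun _ => mem_cluster_of_mem_witnessSet hT)
      (fun a ha _ hz _ hzu hu =>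
        exists_rel_mem_witnessSet hT (hAV a ha) (mem_cluster_of_mem_witnessSet hT hz) hzu hu)
      (fun b hb _ hz _ hzu hu =>
        exists_rel_mem_witnessSet hS (hBV b hb) (mem_cluster_of_mem_witnessSet hS hz) hzu hu),
    rVal_eq_of_agree fun f hf => (hagree f hf).1⟩
  · rw [Nat.card_eq_finsetCard]
    omega
  · rw [Nat.card_eq_finsetCard]
    omega

/-- The polynomial-size bisimilar model property of DL: φ → ψ has no
interpolant in DL iff this is witnessed by a pair of ρ-bisimilar rooted
models, each with at most 12·(n(φ)+n(ψ)) points. -/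
theorem stmt16 (φ ψ : MF) :
    (¬ ∃ ι : MF, ι.sig ⊆ φ.sig ∩ ψ.sig ∧
        DLValid (MF.imp φ ι) ∧ DLValid (MF.imp ι ψ)) ↔
    (∃ (W1 : Type) (M1 : KModel W1) (r1 : W1)
        (W2 : Type) (M2 : KModel W2) (r2 : W2),
      Finite W1 ∧ Nat.card W1 ≤ 12 * (φ.nsub + ψ.nsub) ∧
      Finite W2 ∧ Nat.card W2 ≤ 12 * (φ.nsub + ψ.nsub) ∧
      WTrans M1.R ∧ WTrans M2.R ∧ Symmetric M1.R ∧ Symmetric M2.R ∧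
      (∀ x : W1, x ≠ r1 → M1.R r1 x) ∧ (∀ x : W2, x ≠ r2 → M2.R r2 x) ∧
      Sat M1 r1 φ ∧ Sat M2 r2 (MF.neg ψ) ∧
      Bisimilar (φ.sig ∩ ψ.sig) M1 r1 M2 r2) := by
  constructor
  · intro hno
    by_contra hsmall
    obtain ⟨ι, hsig, hφι, hιψ⟩ := exists_interpolant_of_agree
      (fun _ M => WTrans M.R ∧ Symmetric M.R) (clusterFormulas (φ.sig ∩ ψ.sig))
      sig_clusterFormulas fun _ _ _ _ _ _ ⟨hwM, hsM⟩ ⟨hwN, hsN⟩ hφ hagree => by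
        by_contra hψ
        exact hsmall (exists_small_bisimilar_of_agree hwM hsM hwN hsN hφ hψ hagree)
    exact hno ⟨ι, hsig, dlValid_imp_iff.2 hφι, dlValid_imp_iff.2 hιψ⟩
  · rintro ⟨W1, M1, r1, W2, M2, r2, -, -, -, -, hw1, hw2, hs1, hs2, -, -, hφ, hψ, β, hβ, hr⟩
      ⟨ι, hsig, hφι, hιψ⟩
    have hι : Sat M1 r1 ι := (sat_imp M1 r1 φ ι).1 (hφι W1 M1 hw1 hs1 r1) hφ
    exact hψ ((sat_imp M2 r2 ι ψ).1 (hιψ W2 M2 hw2 hs2 r2) ((hβ.sat_iff hsig hr).1 hι))
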